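/- Let n ≥ 3 be odd and suppose there exists s with 3 ≤ s ≤ n−1 such that n+s+1 and 2n+s+2 are both prime. Then the labeling of GP(n,1) given by: v_i ↦ i for 1 ≤ i ≤ n; u_1 ↦ n+s+1; u_i ↦ n+s+1−i for 2 ≤ i ≤ s; and u_i ↦ 2n+s+2−i for s+1 ≤ i ≤ n, is injective with values in {1,...,2n+1} and assigns coprime labels to every pair of adjacent vertices. -/

import Mathlib

/-!
The two ends of every edge get coprime labels for one of four reasons: the labels are
consecutive integers, one of them is `1`, they are `n + 1` and `2 n + 1 = (n + 1) + n`, or one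
is the prime `n + s + 1` and the other is smaller (edge `u_1 u_2`). On a spoke `v_i u_i` with
`i ≥ 2` the labels add up to the prime `n + s + 1` or `2 n + s + 2`, which reduces to that case.
The inner labels fill `[1, n]` and the outer ones lie in `[n + 1, 2 n + 1]`, the three pieces
of the outer labeling in pairwise disjoint intervals, which gives injectivity.
-/

/-- The prism graph `GP(n,1)`: two `n`-cycles `v` (inl) and `u` (inr) joined by a
perfect matching. -/
def prismGraph (n : ℕ) : SimpleGraph (ZMod n ⊕ ZMod n) :=
  SimpleGraph.fromRel (fun x y =>
    (∃ i : ZMod n, x = Sum.inl i ∧ y = Sum.inl (i + 1)) ∨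
    (∃ i : ZMod n, x = Sum.inr i ∧ y = Sum.inr (i + 1)) ∨
    (∃ i : ZMod n, x = Sum.inl i ∧ y = Sum.inr i))

/-- The labeling of Theorem (pair of primes `n+s+1`, `2n+s+2`): `v_i ↦ i`;
`u_1 ↦ n+s+1`; `u_i ↦ n+s+1-i` for `2 ≤ i ≤ s`; `u_i ↦ 2n+s+2-i` for
`s+1 ≤ i ≤ n` (vertex of value `j` represents index `j+1`). -/
def prismLabel8 (n s : ℕ) : ZMod n ⊕ ZMod n → ℕ
  | Sum.inl i => i.val + 1
  | Sum.inr i =>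
      if i.val = 0 then n + s + 1
      else if i.val + 1 ≤ s then n + s + 1 - (i.val + 1)
      else 2 * n + s + 2 - (i.val + 1)

theorem ZMod.val_add_one_cases {n : ℕ} [NeZero n] {P : ℕ → ℕ → Prop}
    (step : ∀ k, k + 1 < n → P k (k + 1)) (wrap : P (n - 1) 0) (i : ZMod n) :
    P i.val (i + 1).val := by
  have hval : (i + 1).val = (i.val + 1) % n := by
    rw [ZMod.val_add, ZMod.val_one_eq_one_mod, Nat.add_mod_mod]
  have hi := ZMod.val_lt i
  rcases Nat.lt_or_ge (i.val + 1) n with hlt | hge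
  · rw [hval, Nat.mod_eq_of_lt hlt]
    exact step _ hlt
  · have hlast : i.val = n - 1 := by omega
    rw [hval, show i.val + 1 = n by omega, Nat.mod_self, hlast]
    exact wrap

theorem Nat.coprime_of_add_eq_prime {a b p : ℕ} (hp : p.Prime) (hab : a + b = p) (ha : a ≠ 0)
    (hb : b ≠ 0) : Nat.Coprime a b := by
  rw [← Nat.coprime_self_add_right, hab]
  exact (Nat.coprime_of_lt_prime ha (by omega) hp).symm

theorem Nat.coprime_of_eq_add_one {a b : ℕ} (h : a = b + 1) : Nat.Coprime a b := by
  simp [h]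

theorem prismGraph_forall_adj {n : ℕ} {P : ZMod n ⊕ ZMod n → ZMod n ⊕ ZMod n → Prop}
    (symm : ∀ x y, P x y → P y x) (inner : ∀ i, P (.inl i) (.inl (i + 1)))
    (outer : ∀ i, P (.inr i) (.inr (i + 1))) (spoke : ∀ i, P (.inl i) (.inr i)) :
    ∀ x y, (prismGraph n).Adj x y → P x y := by
  have hrel : ∀ x y, ((∃ i : ZMod n, x = .inl i ∧ y = .inl (i + 1)) ∨
      (∃ i : ZMod n, x = .inr i ∧ y = .inr (i + 1)) ∨
      (∃ i : ZMod n, x = .inl i ∧ y = .inr i)) → P x y := by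
    rintro x y (⟨i, rfl, rfl⟩ | ⟨i, rfl, rfl⟩ | ⟨i, rfl, rfl⟩)
    exacts [inner i, outer i, spoke i]
  intro x y hxy
  rw [prismGraph, SimpleGraph.fromRel_adj] at hxy
  rcases hxy with ⟨-, h | h⟩
  exacts [hrel x y h, symm _ _ (hrel y x h)]

/-- The label of the outer vertex `u_{k+1}`, as a function of `k = i.val`. -/
def outerLabel (n s k : ℕ) : ℕ :=
  if k = 0 then n + s + 1
  else if k + 1 ≤ s then n + s + 1 - (k + 1)
  else 2 * n + s + 2 - (k + 1)

theorem prismLabel8_inl (n s : ℕ) (i : ZMod n) : prismLabel8 n s (.inl i) = i.val + 1 := rfl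

theorem prismLabel8_inr (n s : ℕ) (i : ZMod n) :
    prismLabel8 n s (.inr i) = outerLabel n s i.val := rfl

section outerLabel

variable {n s : ℕ}

theorem outerLabel_mem_Icc (hsn : s ≤ n) {k : ℕ} (hk : k < n) :
    outerLabel n s k ∈ Finset.Icc (n + 1) (2 * n + 1) := by
  simp only [outerLabel, Finset.mem_Icc]
  split_ifs <;> omega

theorem outerLabel_injOn : Set.InjOn (outerLabel n s) (Set.Iio n) := by
  intro k hk l hl hkl
  simp only [Set.mem_Iio] at hk hl
  simp only [outerLabel] at hkl
  split_ifs at hkl <;> omega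

theorem outerLabel_coprime_succ (hs : 2 ≤ s) (hp : (n + s + 1).Prime) {k : ℕ} (hk : k + 1 < n) :
    Nat.Coprime (outerLabel n s k) (outerLabel n s (k + 1)) := by
  rcases Nat.eq_zero_or_pos k with rfl | hk0
  · have hfirst : 0 + 1 + 1 ≤ s := by omega
    simp only [outerLabel, if_true, Nat.add_one_ne_zero, hfirst, if_false]
    exact Nat.coprime_of_lt_prime (by omega) (by omega) hp
  simp only [outerLabel, if_neg (by omega : k ≠ 0), if_neg (by omega : k + 1 ≠ 0)]
  rcases Nat.lt_or_ge (k + 2) (s + 1) with hks | hks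
  · rw [if_pos (by omega), if_pos (by omega)]
    exact Nat.coprime_of_eq_add_one (by omega)
  rcases Nat.lt_or_ge k s with hks' | hks'
  · rw [if_pos (by omega), if_neg (by omega),
      show n + s + 1 - (k + 1) = n + 1 by omega,
      show 2 * n + s + 2 - (k + 1 + 1) = n + 1 + n by omega,
      Nat.coprime_self_add_right]
    exact Nat.coprime_of_eq_add_one rfl
  · rw [if_neg (by omega), if_neg (by omega)]
    exact Nat.coprime_of_eq_add_one (by omega)

theorem outerLabel_coprime_wrap (hs : 0 < s) (hsn : s < n) :
    Nat.Coprime (outerLabel n s (n - 1)) (outerLabel n s 0) := by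
  have hlast : n - 1 ≠ 0 := by omega
  have hbig : ¬n - 1 + 1 ≤ s := by omega
  simp only [outerLabel, if_true, hlast, hbig, if_false]
  exact Nat.coprime_of_eq_add_one (by omega)

theorem coprime_outerLabel_spoke (hp₁ : (n + s + 1).Prime) (hp₂ : (2 * n + s + 2).Prime)
    {k : ℕ} (hk : k < n) : Nat.Coprime (k + 1) (outerLabel n s k) := by
  unfold outerLabel
  split_ifs with h0 hks
  · simp [h0]
  · exact Nat.coprime_of_add_eq_prime hp₁ (by omega) (by omega) (by omega)
  · exact Nat.coprime_of_add_eq_prime hp₂ (by omega) (by omega) (by omega)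

end outerLabel

section prismLabel8

variable {n s : ℕ} [NeZero n]

theorem prismLabel8_mem_Icc (hsn : s ≤ n) (x : ZMod n ⊕ ZMod n) :
    prismLabel8 n s x ∈ Finset.Icc 1 (2 * n + 1) := by
  rcases x with i | i
  · simp only [prismLabel8_inl, Finset.mem_Icc]
    have := ZMod.val_lt i
    omega
  · have := outerLabel_mem_Icc hsn (ZMod.val_lt i)
    simp only [prismLabel8_inr, Finset.mem_Icc] at this ⊢
    omega

theorem prismLabel8_inl_lt_inr (hsn : s ≤ n) (i j : ZMod n) :
    prismLabel8 n s (.inl i) < prismLabel8 n s (.inr j) := by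
  have := outerLabel_mem_Icc hsn (ZMod.val_lt j)
  simp only [prismLabel8_inl, prismLabel8_inr, Finset.mem_Icc] at this ⊢
  have := ZMod.val_lt i
  omega

theorem prismLabel8_injective (hsn : s ≤ n) : Function.Injective (prismLabel8 n s) := by
  rintro (i | i) (j | j) hij
  · exact congrArg Sum.inl (ZMod.val_injective n (by simpa [prismLabel8_inl] using hij))
  · exact absurd hij (prismLabel8_inl_lt_inr hsn i j).ne
  · exact absurd hij (prismLabel8_inl_lt_inr hsn j i).ne'
  · exact congrArg Sum.inr (ZMod.val_injective n
      (outerLabel_injOn (ZMod.val_lt i) (ZMod.val_lt j) hij))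

theorem prismLabel8_coprime_of_adj (hs : 2 ≤ s) (hsn : s < n)
    (hp₁ : (n + s + 1).Prime) (hp₂ : (2 * n + s + 2).Prime) :
    ∀ x y, (prismGraph n).Adj x y → Nat.Coprime (prismLabel8 n s x) (prismLabel8 n s y) := by
  refine prismGraph_forall_adj (fun x y h => h.symm) (fun i => ?_) (fun i => ?_) (fun i => ?_)
  · exact ZMod.val_add_one_cases (P := fun k l => Nat.Coprime (k + 1) (l + 1))
      (fun k _ => (Nat.coprime_of_eq_add_one rfl).symm) (by simp) i
  · exact ZMod.val_add_one_cases
      (P := fun k l => Nat.Coprime (outerLabel n s k) (outerLabel n s l))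
      (fun k hk => outerLabel_coprime_succ hs hp₁ hk) (outerLabel_coprime_wrap (by omega) hsn) i
  · exact coprime_outerLabel_spoke hp₁ hp₂ (ZMod.val_lt i)

end prismLabel8

theorem prism_coprime_labeling_of_prime_pair_general (n s : ℕ) (hs : 3 ≤ s) (hsn : s ≤ n - 1)
    (hp1 : Nat.Prime (n + s + 1)) (hp2 : Nat.Prime (2 * n + s + 2)) :
    Function.Injective (prismLabel8 n s) ∧
    (∀ x, prismLabel8 n s x ∈ Finset.Icc 1 (2 * n + 1)) ∧
    (∀ x y, (prismGraph n).Adj x y →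
      Nat.Coprime (prismLabel8 n s x) (prismLabel8 n s y)) := by
  have : NeZero n := ⟨by omega⟩
  exact ⟨prismLabel8_injective (by omega), prismLabel8_mem_Icc (by omega),
    prismLabel8_coprime_of_adj (by omega) (by omega) hp1 hp2⟩

theorem prism_coprime_labeling_of_prime_pair (n s : ℕ) (hn : 3 ≤ n)
    (hodd : Odd n) (hs : 3 ≤ s) (hsn : s ≤ n - 1)
    (hp1 : Nat.Prime (n + s + 1)) (hp2 : Nat.Prime (2 * n + s + 2)) :
    Function.Injective (prismLabel8 n s) ∧
    (∀ x, prismLabel8 n s x ∈ Finset.Icc 1 (2 * n + 1)) ∧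
    (∀ x y, (prismGraph n).Adj x y →
      Nat.Coprime (prismLabel8 n s x) (prismLabel8 n s y)) :=
  prism_coprime_labeling_of_prime_pair_general n s hs hsn hp1 hp2
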